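/- Let F be a field with pairwise distinct ζ₁,...,ζ₅ and consider a single inner vertex i = 1 contained in tetrahedra t among the 4-element subsets of {1,...,5} containing 1. Define g₂(e₁) = Σ_{t ∋ 1} (ζ_{1j}ζ_{1k}ζ_{1l})⁻¹ e_t, where {j,k,l} = t \ {1}, and define g₃(e_t) for a tetrahedron t shared by the two 4-simplices obtained by adjoining one of the two remaining vertices, as e_{u,m} for the vertex m ∉ t of each such 4-simplex u. Then g₃(g₂(e₁)) = 0 in ⊕_u E_u, whenever every tetrahedron containing vertex 1 is inner (i.e., shared by exactly two of the 4-simplices of the star of 1). -/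

import Mathlib

noncomputable section

variable (F : Type*) [Field F] (ζ : Fin 6 → F)

/-- Indicator function of a 4-simplex `u` (coefficient vectors in `E_u` are functions
`Fin 6 → F` supported on `u`, and `E_u` is the quotient by the span of the indicator of
`u` and its `ζ`-weighted version). -/
def ind (u : Finset (Fin 6)) : Fin 6 → F := fun p => if p ∈ u then 1 else 0

/-- The coefficient vector of `g₃(g₂(e₁))` in the summand `E_u` for the 4-simplex
`u = {1,…,6} \ {m}` of the star of the inner vertex `1` (0-indexed: vertex `0`) inside the
boundary of the 5-simplex on `{1,…,6}`: for each tetrahedron `t = u.erase m'` containing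
`0`, the contribution is `(ζ_{0j}ζ_{0k}ζ_{0l})⁻¹ e_{u,m'}` where `{j,k,l} = t \ {0}`. -/
def g3g2coeff (u : Finset (Fin 6)) : Fin 6 → F := fun m' =>
  if m' ∈ u ∧ m' ≠ 0 then (∏ p ∈ (u.erase m').erase 0, (ζ 0 - ζ p))⁻¹ else 0

theorem Finset.inv_prod_erase {ι K : Type*} [DecidableEq ι] [Field K] {s : Finset ι}
    {f : ι → K} {i : ι} (hi : i ∈ s) (hfi : f i ≠ 0) :
    (∏ p ∈ s.erase i, f p)⁻¹ = f i * (∏ p ∈ s, f p)⁻¹ := by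
  rw [← Finset.mul_prod_erase s f hi, mul_inv, mul_inv_cancel_left₀ hfi]

/-- `(ζ_{0j}ζ_{0k}ζ_{0l})⁻¹ = ζ_{0m'} / ∏_{p ∈ u, p ≠ 0} ζ_{0p}`, and the right side also
vanishes at `m' = 0`, where `ζ_{00} = 0`. -/
theorem g3g2coeff_eq_smul (hζ : Function.Injective ζ) (u : Finset (Fin 6)) :
    g3g2coeff F ζ u = (∏ p ∈ u.erase 0, (ζ 0 - ζ p))⁻¹ •
      (ζ 0 • ind F u - fun p => ζ p * ind F u p) := by
  funext q
  by_cases hq : q ∈ u ∧ q ≠ 0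
  · have hζq : ζ 0 - ζ q ≠ 0 := sub_ne_zero.mpr fun h => hq.2 (hζ h).symm
    simp only [g3g2coeff, ind, if_pos hq, if_pos hq.1, Pi.smul_apply, Pi.sub_apply, smul_eq_mul,
      mul_one]
    rw [Finset.erase_right_comm, Finset.inv_prod_erase (Finset.mem_erase.mpr ⟨hq.2, hq.1⟩) hζq]
    ring
  · rw [not_and_or, not_not] at hq
    rcases hq with hq | rfl
    · simp [g3g2coeff, ind, hq]
    · simp [g3g2coeff]

theorem g3_g2_eq_zero (hζ : Function.Injective ζ) (m : Fin 6) :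
    g3g2coeff F ζ (Finset.univ.erase m) ∈
      Submodule.span F
        {ind F (Finset.univ.erase m),
         fun p => ζ p * ind F (Finset.univ.erase m) p} := by
  rw [g3g2coeff_eq_smul F ζ hζ]
  refine Submodule.smul_mem _ _ (Submodule.sub_mem _ ?_ ?_)
  · exact Submodule.smul_mem _ _ (Submodule.subset_span (Set.mem_insert _ _))
  · exact Submodule.subset_span (Set.mem_insert_of_mem _ rfl)

end
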